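/- arXiv:0706.1740 — 3 statements merged into one kernel-verified Lean document; each statement's English description precedes it below -/
import Mathlib

section
/- Let F be a pseudo path factor of a (3,4)-biregular bipartite graph G with bipartition (Y,X). Then F has a component which is a path of length at least 4 (i.e., with at least 4 edges). -/
/-!
If no component of `F` has length at least 4, then no `y ∈ Y` has two `F`-neighbours: both
would lie in `X`, have a second `F`-neighbour each, and in a forest the resulting walk of
length 4 without backtracking is a path. Double counting edges then gives
`3|Y| ≤ 4|X|` in `G` and `2|X| ≤ |Y|` in `F`, forcing `X = ∅`.
-/

/-- Degree of a vertex in a (possibly infinite) simple graph, as `Set.ncard`. -/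
noncomputable def fdeg {V : Type*} (G : SimpleGraph V) (v : V) : ℕ := (G.neighborSet v).ncard

open Finset

namespace SimpleGraph

variable {V : Type*} {G : SimpleGraph V}

lemma fdeg_eq_degree (v : V) [Fintype (G.neighborSet v)] :
    fdeg G v = G.degree v := by
  rw [fdeg, Set.ncard_eq_toFinset_card', ← card_neighborSet_eq_degree, Set.toFinset_card]

lemma IsBipartiteWith.card_mul_le_card_mul [G.LocallyFinite] {s t : Finset V} {a b : ℕ}
    (h : G.IsBipartiteWith s t) (hs : ∀ v ∈ s, G.degree v ≤ a)
    (ht : ∀ w ∈ t, b ≤ G.degree w) :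
    #t * b ≤ #s * a :=
  calc #t * b = ∑ _w ∈ t, b := by rw [sum_const, smul_eq_mul]
    _ ≤ ∑ w ∈ t, G.degree w := sum_le_sum ht
    _ = ∑ v ∈ s, G.degree v := (isBipartiteWith_sum_degrees_eq h).symm
    _ ≤ ∑ _v ∈ s, a := sum_le_sum hs
    _ = #s * a := by rw [sum_const, smul_eq_mul]

lemma IsAcyclic.exists_isPath_length_eq_four [G.LocallyFinite] (hG : G.IsAcyclic) {y : V}
    (hy : 1 < G.degree y) (hnbr : ∀ x, G.Adj y x → 1 < G.degree x) :
    ∃ (u v : V) (p : G.Walk u v), p.IsPath ∧ p.length = 4 := by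
  obtain ⟨x, hx, x', hx', hxx'⟩ := one_lt_card.1 (card_neighborFinset_eq_degree G y ▸ hy)
  rw [mem_neighborFinset] at hx hx'
  obtain ⟨y₁, hy₁, hy₁y⟩ :=
    exists_mem_ne (card_neighborFinset_eq_degree G x ▸ hnbr x hx) y
  obtain ⟨y₂, hy₂, hy₂y⟩ :=
    exists_mem_ne (card_neighborFinset_eq_degree G x' ▸ hnbr x' hx') y
  rw [mem_neighborFinset] at hy₁ hy₂
  let p : G.Walk y₁ y₂ := .cons hy₁.symm <| .cons hx.symm <| .cons hx' <| .cons hy₂ .nil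
  refine ⟨y₁, y₂, p, (hG.isPath_iff_isChain p).2 ?_, rfl⟩
  simp [p, hy₁y, hxx', hy₂y.symm, hy₁.ne', hx.ne', hx'.ne]

end SimpleGraph

open SimpleGraph

theorem stmt_2_general {V : Type*} [Fintype V] (G : SimpleGraph V) (Y X : Finset V)
    (hbip : ∀ u v, G.Adj u v → (u ∈ Y ∧ v ∈ X) ∨ (u ∈ X ∧ v ∈ Y))
    (hY : ∀ y ∈ Y, fdeg G y = 3) (hX : ∀ x ∈ X, fdeg G x = 4)
    (hne : X.Nonempty)
    (F : SimpleGraph V) (hFG : F ≤ G) (hacyc : F.IsAcyclic)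
    (hFX : ∀ x ∈ X, fdeg F x = 2) :
    ∃ (u v : V) (p : F.Walk u v), p.IsPath ∧ 4 ≤ p.length := by
  classical
  simp only [fdeg_eq_degree] at hY hX hFX
  have hdisj : Disjoint (Y : Set V) X :=
    Set.disjoint_left.2 fun v hvY hvX => by simpa [hY v hvY] using hX v hvX
  have hG : G.IsBipartiteWith Y X := ⟨hdisj, hbip⟩
  have hF : F.IsBipartiteWith Y X := ⟨hdisj, fun u v h => hbip u v (hFG h)⟩
  by_contra! hshort
  have hleaf : ∀ y ∈ Y, F.degree y ≤ 1 := by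
    intro y hy
    by_contra! hdeg
    obtain ⟨u, v, p, hp, hlen⟩ := hacyc.exists_isPath_length_eq_four hdeg
      fun x hx => by simp [hFX x (hF.mem_of_mem_adj hy hx)]
    exact (hshort u v p hp).ne hlen
  have hGcount :=
    hG.symm.card_mul_le_card_mul (fun x hx => (hX x hx).le) (fun y hy => (hY y hy).ge)
  have hFcount := hF.card_mul_le_card_mul hleaf (fun x hx => (hFX x hx).ge)
  have := hne.card_pos
  omega

/-- Let `F` be a pseudo path factor of a (3,4)-biregular bipartite graph `G` with
bipartition `(Y, X)` (every component of `F` is a path of even positive length,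
with both endpoints in `Y`, and every `x ∈ X` has degree 2 in `F`).  Then `F` has
a component which is a path of length at least 4, i.e. `F` contains a path with at
least 4 edges. -/
theorem stmt_2 {V : Type*} [Fintype V] (G : SimpleGraph V) (Y X : Finset V)
    (hpart : ∀ v, (v ∈ Y ∧ v ∉ X) ∨ (v ∈ X ∧ v ∉ Y))
    (hbip : ∀ u v, G.Adj u v → (u ∈ Y ∧ v ∈ X) ∨ (u ∈ X ∧ v ∈ Y))
    (hY : ∀ y ∈ Y, fdeg G y = 3) (hX : ∀ x ∈ X, fdeg G x = 4)
    (hne : X.Nonempty)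
    (F : SimpleGraph V) (hFG : F ≤ G) (hacyc : F.IsAcyclic)
    (hFX : ∀ x ∈ X, fdeg F x = 2) (hFY : ∀ y ∈ Y, fdeg F y ≤ 2)
    (hends : ∀ v, fdeg F v = 1 → v ∈ Y) :
    ∃ (u v : V) (p : F.Walk u v), p.IsPath ∧ 4 ≤ p.length :=
  stmt_2_general G Y X hbip hY hX hne F hFG hacyc hFX
end

section
/- Let F be a pseudo path factor of a simple (3,4)-biregular bipartite graph G with bipartition (Y,X), and suppose some vertex y0 in Y has degree 0 in F. Then there exists a pseudo path factor F' of G such that the set of Y-vertices covered by F' equals the set covered by F together with y0. -/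
namespace PseudoPathFactor

open SimpleGraph Finset

variable {V : Type*} {F G : SimpleGraph V} {a u v w x : V}

lemma fdeg_pos_of_adj [Finite V] (h : F.Adj v w) : 0 < fdeg F v :=
  (Set.ncard_pos (Set.toFinite _)).mpr ⟨w, h⟩

lemma not_adj_of_fdeg_eq_zero [Finite V] (h : fdeg F v = 0) : ¬F.Adj v w :=
  fun hvw => (fdeg_pos_of_adj hvw).ne' h

lemma ne_of_adj_of_fdeg_eq_zero [Finite V] (ha : fdeg F a = 0) (h : F.Adj v w) : a ≠ v := by
  rintro rfl
  exact not_adj_of_fdeg_eq_zero ha h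

lemma eq_of_fdeg_eq_one {w' : V} (h : fdeg F v = 1) (hw : F.Adj v w) (hw' : F.Adj v w') :
    w = w' := by
  obtain ⟨b, hb⟩ := Set.ncard_eq_one.mp h
  have hw : w ∈ F.neighborSet v := hw
  have hw' : w' ∈ F.neighborSet v := hw'
  rw [hb] at hw hw'
  exact hw.trans hw'.symm

def swapEdge (F : SimpleGraph V) (a x u : V) : SimpleGraph V :=
  F.deleteEdges {s(x, u)} ⊔ edge a x

lemma swapEdge_adj {p q : V} : (swapEdge F a x u).Adj p q ↔
    F.Adj p q ∧ ¬(p = x ∧ q = u ∨ p = u ∧ q = x) ∨ (p = a ∧ q = x ∨ p = x ∧ q = a) ∧ p ≠ q := by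
  simp [swapEdge, edge_adj]

lemma neighborSet_swapEdge_of_ne (hva : v ≠ a) (hvx : v ≠ x) (hvu : v ≠ u) :
    (swapEdge F a x u).neighborSet v = F.neighborSet v := by
  ext w
  rw [mem_neighborSet, mem_neighborSet, swapEdge_adj]
  grind

section swapEdge

variable [Finite V]

lemma neighborSet_swapEdge_left (ha : fdeg F a = 0) (hxu : F.Adj x u) :
    (swapEdge F a x u).neighborSet a = {x} := by
  have hax : a ≠ x := ne_of_adj_of_fdeg_eq_zero ha hxu
  ext w
  have := not_adj_of_fdeg_eq_zero (w := w) ha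
  rw [mem_neighborSet, swapEdge_adj, Set.mem_singleton_iff]
  grind

lemma neighborSet_swapEdge_middle (ha : fdeg F a = 0) (hxu : F.Adj x u) :
    (swapEdge F a x u).neighborSet x = insert a (F.neighborSet x \ {u}) := by
  have hax : a ≠ x := ne_of_adj_of_fdeg_eq_zero ha hxu
  have hau : a ≠ u := ne_of_adj_of_fdeg_eq_zero ha hxu.symm
  ext w
  rw [mem_neighborSet, swapEdge_adj, Set.mem_insert_iff, Set.mem_sdiff,
    Set.mem_singleton_iff, mem_neighborSet]
  grind [Adj.ne]

lemma neighborSet_swapEdge_right (ha : fdeg F a = 0) (hxu : F.Adj x u) :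
    (swapEdge F a x u).neighborSet u = F.neighborSet u \ {x} := by
  have hau : a ≠ u := ne_of_adj_of_fdeg_eq_zero ha hxu.symm
  ext w
  rw [mem_neighborSet, swapEdge_adj, Set.mem_sdiff, Set.mem_singleton_iff, mem_neighborSet]
  grind [Adj.ne]

lemma fdeg_swapEdge_left (ha : fdeg F a = 0) (hxu : F.Adj x u) :
    fdeg (swapEdge F a x u) a = 1 := by
  rw [fdeg, neighborSet_swapEdge_left ha hxu, Set.ncard_singleton]

lemma fdeg_swapEdge_right (ha : fdeg F a = 0) (hxu : F.Adj x u) :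
    fdeg (swapEdge F a x u) u = fdeg F u - 1 := by
  rw [fdeg, neighborSet_swapEdge_right ha hxu,
    Set.ncard_sdiff_singleton_of_mem (show x ∈ F.neighborSet u from hxu.symm), fdeg]

lemma fdeg_swapEdge_of_ne (ha : fdeg F a = 0) (hxu : F.Adj x u) (hva : v ≠ a) (hvu : v ≠ u) :
    fdeg (swapEdge F a x u) v = fdeg F v := by
  by_cases hvx : v = x
  · subst hvx
    have haN : a ∉ F.neighborSet v \ {u} := fun h => not_adj_of_fdeg_eq_zero ha h.1.symm
    rw [fdeg, neighborSet_swapEdge_middle ha hxu, Set.ncard_insert_of_notMem haN,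
      Set.ncard_sdiff_singleton_of_mem (show u ∈ F.neighborSet v from hxu)]
    exact Nat.sub_add_cancel (fdeg_pos_of_adj hxu)
  · rw [fdeg, neighborSet_swapEdge_of_ne hva hvx hvu, fdeg]

lemma isAcyclic_swapEdge (hF : F.IsAcyclic) (ha : fdeg F a = 0) (hxu : F.Adj x u) :
    (swapEdge F a x u).IsAcyclic := by
  have hax : a ≠ x := ne_of_adj_of_fdeg_eq_zero ha hxu
  refine (hF.anti (F.deleteEdges_le _)).sup_edge_of_not_reachable ?_
  rintro ⟨_ | ⟨h, -⟩⟩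
  · exact hax rfl
  · exact not_adj_of_fdeg_eq_zero ha (deleteEdges_le _ h)

end swapEdge

lemma swapEdge_le (hF : F ≤ G) (hax : G.Adj a x) : swapEdge F a x u ≤ G :=
  sup_le ((F.deleteEdges_le _).trans hF) ((edge_le_iff G).mpr (Or.inr hax))

lemma swapEdge_adj_of_adj {p q : V} (h : F.Adj p q) (hp : p ≠ u) (hq : q ≠ u) :
    (swapEdge F a x u).Adj p q :=
  swapEdge_adj.mpr (Or.inl ⟨h, by grind⟩)

/-- An acyclic graph of maximum degree 2 is a disjoint union of paths; requiring degree 2 on `X`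
and all ends in `Y` makes each nontrivial path have even length in the bipartite `G`. -/
structure IsPseudoPathFactor (G : SimpleGraph V) (Y X : Set V) (F : SimpleGraph V) : Prop where
  le : F ≤ G
  isAcyclic : F.IsAcyclic
  fdeg_of_mem_X : ∀ x ∈ X, fdeg F x = 2
  fdeg_le_of_mem_Y : ∀ y ∈ Y, fdeg F y ≤ 2
  mem_Y_of_fdeg_eq_one : ∀ v, fdeg F v = 1 → v ∈ Y

variable {Y X : Set V}

lemma IsPseudoPathFactor.swapEdge [Finite V] (hF : IsPseudoPathFactor G Y X F)
    (hYX : Disjoint Y X) (haY : a ∈ Y) (huY : u ∈ Y) (ha : fdeg F a = 0) (hxu : F.Adj x u)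
    (hax : G.Adj a x) : IsPseudoPathFactor G Y X (swapEdge F a x u) where
  le := swapEdge_le hF.le hax
  isAcyclic := isAcyclic_swapEdge hF.isAcyclic ha hxu
  fdeg_of_mem_X v hv := by
    rw [fdeg_swapEdge_of_ne ha hxu (hYX.ne_of_mem haY hv).symm (hYX.ne_of_mem huY hv).symm]
    exact hF.fdeg_of_mem_X v hv
  fdeg_le_of_mem_Y v hv := by
    by_cases hva : v = a
    · rw [hva, fdeg_swapEdge_left ha hxu]; omega
    by_cases hvu : v = u
    · rw [hvu, fdeg_swapEdge_right ha hxu]; have := hF.fdeg_le_of_mem_Y u huY; omega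
    rw [fdeg_swapEdge_of_ne ha hxu hva hvu]
    exact hF.fdeg_le_of_mem_Y v hv
  mem_Y_of_fdeg_eq_one v hv := by
    by_cases hva : v = a
    · exact hva ▸ haY
    by_cases hvu : v = u
    · exact hvu ▸ huY
    rw [fdeg_swapEdge_of_ne ha hxu hva hvu] at hv
    exact hF.mem_Y_of_fdeg_eq_one v hv

def Augmentable (G : SimpleGraph V) (Y X : Set V) (F : SimpleGraph V) (y₀ : V) : Prop :=
  ∃ F', IsPseudoPathFactor G Y X F' ∧ ∀ y ∈ Y, (0 < fdeg F' y ↔ 0 < fdeg F y ∨ y = y₀)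

section augmentable

variable [Finite V] {y₀ : V}

lemma augmentable_of_adj_of_fdeg_eq_two (hF : IsPseudoPathFactor G Y X F)
    (hbip : G.IsBipartiteWith Y X) (hy₀ : y₀ ∈ Y) (h₀ : fdeg F y₀ = 0) (hy₀x : G.Adj y₀ x)
    (hxw : F.Adj x w) (hw : fdeg F w = 2) : Augmentable G Y X F y₀ := by
  have hwY : w ∈ Y := hbip.mem_of_mem_adj' (hbip.mem_of_mem_adj hy₀ hy₀x) (hF.le hxw).symm
  refine ⟨swapEdge F y₀ x w, hF.swapEdge hbip.disjoint hy₀ hwY h₀ hxw hy₀x, fun y _ => ?_⟩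
  by_cases hy : y = y₀
  · simp [hy, fdeg_swapEdge_left h₀ hxw]
  by_cases hyw : y = w
  · simp [hyw, fdeg_swapEdge_right h₀ hxw, hw]
  simp [fdeg_swapEdge_of_ne h₀ hxw hy hyw, hy]

lemma Augmentable.of_swapEdge (h₀ : fdeg F y₀ = 0) (hxu : F.Adj x u) (hu : fdeg F u = 1)
    (h : Augmentable G Y X (swapEdge F y₀ x u) u) : Augmentable G Y X F y₀ := by
  obtain ⟨F', hF', hcover⟩ := h
  refine ⟨F', hF', fun y hy => ?_⟩
  rw [hcover y hy]
  by_cases hy : y = y₀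
  · simp [hy, fdeg_swapEdge_left h₀ hxu]
  by_cases hyu : y = u
  · simp [hyu, hu]
  simp [fdeg_swapEdge_of_ne h₀ hxu hy hyu, hy, hyu]

end augmentable

def IsStarCenter (F : SimpleGraph V) (x : V) : Prop :=
  ∀ w, F.Adj x w → fdeg F w = 1

inductive AltChain (G F : SimpleGraph V) : V → ℕ → V → Prop
  | refl (y : V) : AltChain G F y 0 y
  | step {y x u z : V} {n : ℕ} : G.Adj y x → IsStarCenter F x → F.Adj x u →
      AltChain G F u n z → AltChain G F y (n + 1) z

namespace AltChain

variable {y z : V} {n : ℕ}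

lemma tail (hc : AltChain G F y n v) (hvx : G.Adj v x) (hx : IsStarCenter F x)
    (hxw : F.Adj x w) : AltChain G F y (n + 1) w := by
  induction hc with
  | refl => exact step hvx hx hxw (refl w)
  | step hyx' hx' hx'u _ ih => exact step hyx' hx' hx'u (ih hvx)

lemma eq_or_fdeg_eq_one (hc : AltChain G F y n z) : z = y ∨ fdeg F z = 1 := by
  induction hc with
  | refl => exact .inl rfl
  | step _ hx hxu _ ih => exact .inr (ih.elim (fun h => h ▸ hx _ hxu) id)

lemma mem_of_mem (hF : IsPseudoPathFactor G Y X F) (hc : AltChain G F y n z) (hy : y ∈ Y) :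
    z ∈ Y :=
  hc.eq_or_fdeg_eq_one.elim (· ▸ hy) (hF.mem_Y_of_fdeg_eq_one z)

end AltChain

section

variable [Finite V] {x' : V}

lemma adj_swapEdge_iff_of_isStarCenter (hx' : IsStarCenter F x') (hx'v : F.Adj x' v)
    (hne : x' ≠ x) (ha : fdeg F a = 0) (hx2 : fdeg F x = 2) (hxu : F.Adj x u) :
    (swapEdge F a x u).Adj x' w ↔ F.Adj x' w := by
  have hx'a : x' ≠ a := (ne_of_adj_of_fdeg_eq_zero ha hx'v).symm
  have hx'u : x' ≠ u := by rintro rfl; have := hx' x hxu.symm; omega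
  rw [← mem_neighborSet, neighborSet_swapEdge_of_ne hx'a hne hx'u, mem_neighborSet]

lemma IsStarCenter.swapEdge (hx' : IsStarCenter F x') (hx'v : F.Adj x' v) (hne : x' ≠ x)
    (ha : fdeg F a = 0) (hx2 : fdeg F x = 2) (hxu : F.Adj x u) :
    IsStarCenter (swapEdge F a x u) x' := by
  intro w hw
  rw [adj_swapEdge_iff_of_isStarCenter hx' hx'v hne ha hx2 hxu] at hw
  have hw1 := hx' w hw
  have hwa : w ≠ a := by rintro rfl; omega
  have hwu : w ≠ u := by
    rintro rfl
    exact hne (eq_of_fdeg_eq_one hw1 hw.symm hxu.symm)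
  rwa [fdeg_swapEdge_of_ne ha hxu hwa hwu]

/-- Only the centre `x` loses a neighbour in the exchange, and a chain passing through `x` can
be restarted at a leaf of `x`. -/
lemma AltChain.swapEdge_or_exists_shorter (ha : fdeg F a = 0)
    (hx2 : fdeg F x = 2) (hxu : F.Adj x u) {y z : V} {n : ℕ} (hc : AltChain G F y n z) :
    AltChain G (swapEdge F a x u) y n z ∨ ∃ u' m, m < n ∧ F.Adj x u' ∧ AltChain G F u' m z := by
  induction hc with
  | refl => exact .inl (.refl _)
  | @step y x' u' z n hyx' hx' hx'u' hc ih =>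
    by_cases hx'x : x' = x
    · subst hx'x
      exact .inr ⟨u', n, n.lt_succ_self, hx'u', hc⟩
    rcases ih with hc' | ⟨u'', m, hm, hxu'', hc''⟩
    · exact .inl (.step hyx' (hx'.swapEdge hx'u' hx'x ha hx2 hxu)
        ((adj_swapEdge_iff_of_isStarCenter hx' hx'u' hx'x ha hx2 hxu).mpr hx'u') hc')
    · exact .inr ⟨u'', m, by omega, hxu'', hc''⟩

end

theorem augmentable_of_altChain [Finite V] {y₀ z : V} {n : ℕ} (hbip : G.IsBipartiteWith Y X)
    (hF : IsPseudoPathFactor G Y X F) (hy₀ : y₀ ∈ Y) (h₀ : fdeg F y₀ = 0)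
    (hc : AltChain G F y₀ n z) (hzx : G.Adj z x) (hxw : F.Adj x w) (hw : fdeg F w = 2) :
    Augmentable G Y X F y₀ := by
  induction n using Nat.strong_induction_on generalizing F y₀ with
  | _ n ih =>
  cases hc with
  | refl => exact augmentable_of_adj_of_fdeg_eq_two hF hbip hy₀ h₀ hzx hxw hw
  | @step _ x₁ u₁ _ m hy₀x₁ hx₁ hx₁u₁ hc =>
    have hx₁2 : fdeg F x₁ = 2 := hF.fdeg_of_mem_X x₁ (hbip.mem_of_mem_adj hy₀ hy₀x₁)
    have hu₁ : fdeg F u₁ = 1 := hx₁ u₁ hx₁u₁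
    have hu₁Y : u₁ ∈ Y := hF.mem_Y_of_fdeg_eq_one u₁ hu₁
    rcases hc.swapEdge_or_exists_shorter h₀ hx₁2 hx₁u₁ with hc' | ⟨u', m', hm', hx₁u', hc'⟩
    · have hxX : x ∈ X := hbip.mem_of_mem_adj (hc.mem_of_mem hF hu₁Y) hzx
      have hxu₁ : x ≠ u₁ := (hbip.disjoint.ne_of_mem hu₁Y hxX).symm
      have hwu₁ : w ≠ u₁ := by rintro rfl; omega
      have hwy₀ : w ≠ y₀ := by rintro rfl; omega
      refine Augmentable.of_swapEdge h₀ hx₁u₁ hu₁ (ih m m.lt_succ_self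
        (hF.swapEdge hbip.disjoint hy₀ hu₁Y h₀ hx₁u₁ hy₀x₁) hu₁Y ?_ hc'
        (swapEdge_adj_of_adj hxw hxu₁ hwu₁) ?_)
      · rw [fdeg_swapEdge_right h₀ hx₁u₁, hu₁]
      · rwa [fdeg_swapEdge_of_ne h₀ hx₁u₁ hwy₀ hwu₁]
    · exact ih (m' + 1) (by omega) hF hy₀ h₀ (.step hy₀x₁ hx₁ hx₁u' hc') hxw hw

lemma card_filter_adj_eq_fdeg (H : SimpleGraph V) [DecidableRel H.Adj] {s : Finset V}
    (hs : ∀ w, H.Adj v w → w ∈ s) : #{w ∈ s | H.Adj v w} = fdeg H v := by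
  rw [fdeg, ← Set.ncard_coe_finset]
  congr 1
  ext w
  simpa using hs w

lemma card_filter_adj_le_fdeg [Finite V] (H : SimpleGraph V) [DecidableRel H.Adj]
    (s : Finset V) : #{w ∈ s | H.Adj v w} ≤ fdeg H v := by
  rw [fdeg, ← Set.ncard_coe_finset]
  exact Set.ncard_le_ncard (fun w hw => (Finset.mem_filter.mp hw).2)

lemma card_mul_le_card_mul_of_adj [Finite V] (H : SimpleGraph V) {s t : Finset V} {m n : ℕ}
    (hst : ∀ v ∈ s, ∀ w, H.Adj v w → w ∈ t) (hs : ∀ v ∈ s, m ≤ fdeg H v)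
    (ht : ∀ w ∈ t, fdeg H w ≤ n) : #s * m ≤ #t * n := by
  classical
  refine card_mul_le_card_mul H.Adj (fun v hv => ?_) (fun w hw => ?_)
  · rw [bipartiteAbove, card_filter_adj_eq_fdeg H (hst v hv)]
    exact hs v hv
  · simp_rw [bipartiteBelow, adj_comm]
    exact (card_filter_adj_le_fdeg H s).trans (ht w hw)

theorem exists_altChain_to_fdeg_eq_two [Finite V] {d : ℕ} {y₀ : V} (hd : 0 < d)
    (hbip : G.IsBipartiteWith Y X) (hY : ∀ y ∈ Y, d ≤ fdeg G y) (hX : ∀ x ∈ X, fdeg G x ≤ 2 * d)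
    (hF : IsPseudoPathFactor G Y X F) (hy₀ : y₀ ∈ Y) (h₀ : fdeg F y₀ = 0) :
    ∃ n z x w, AltChain G F y₀ n z ∧ G.Adj z x ∧ F.Adj x w ∧ fdeg F w = 2 := by
  classical
  cases nonempty_fintype V
  by_contra hno
  push Not at hno
  set B : Finset V := {v | ∃ n, AltChain G F y₀ n v}
  set A : Finset V := {x | ∃ v ∈ B, G.Adj v x}
  have hy₀B : y₀ ∈ B := by simpa [B] using ⟨0, .refl y₀⟩
  have hBY : ∀ v ∈ B, v ∈ Y := by
    intro v hv
    obtain ⟨n, hc⟩ := by simpa [B] using hv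
    exact hc.mem_of_mem hF hy₀
  have hAX : ∀ x ∈ A, x ∈ X := by
    intro x hx
    obtain ⟨v, hv, hvx⟩ := by simpa [A] using hx
    exact hbip.mem_of_mem_adj (hBY v hv) hvx
  have hstar : ∀ x ∈ A, IsStarCenter F x := by
    intro x hx w hxw
    obtain ⟨v, hv, hvx⟩ := by simpa [A] using hx
    obtain ⟨n, hc⟩ := by simpa [B] using hv
    have hw : 0 < fdeg F w := fdeg_pos_of_adj hxw.symm
    have := hF.fdeg_le_of_mem_Y w (hbip.mem_of_mem_adj' (hAX x hx) (hF.le hxw).symm)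
    have := hno n v x w hc hvx hxw
    omega
  have hcountG : #B * d ≤ #A * (2 * d) :=
    card_mul_le_card_mul_of_adj G (fun v hv x hvx => by simpa [A] using ⟨v, hv, hvx⟩)
      (fun v hv => hY v (hBY v hv)) (fun x hx => hX x (hAX x hx))
  have hcountF : #A * 2 ≤ #(B.erase y₀) * 1 := by
    refine card_mul_le_card_mul_of_adj F (fun x hx w hxw => ?_)
      (fun x hx => (hF.fdeg_of_mem_X x (hAX x hx)).ge) (fun w hw => ?_)
    · obtain ⟨v, hv, hvx⟩ := by simpa [A] using hx
      obtain ⟨n, hc⟩ := by simpa [B] using hv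
      refine mem_erase.mpr ⟨?_, by simpa [B] using ⟨n + 1, hc.tail hvx (hstar x hx) hxw⟩⟩
      rintro rfl
      exact not_adj_of_fdeg_eq_zero h₀ hxw.symm
    · obtain ⟨hwy₀, hwB⟩ := mem_erase.mp hw
      obtain ⟨n, hc⟩ := by simpa [B] using hwB
      exact (hc.eq_or_fdeg_eq_one.resolve_left hwy₀).le
  have hB : #B ≤ #B - 1 := by
    refine Nat.le_of_mul_le_mul_right ?_ hd
    calc #B * d ≤ #A * 2 * d := by rw [mul_assoc]; exact hcountG
      _ ≤ (#B - 1) * d := by rw [← card_erase_of_mem hy₀B, ← mul_one #(B.erase y₀)]; gcongr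
  have : 0 < #B := card_pos.mpr ⟨y₀, hy₀B⟩
  omega

end PseudoPathFactor

open PseudoPathFactor in
/-- Let `F` be a pseudo path factor of a simple (3,4)-biregular bipartite graph `G`
with bipartition `(Y, X)`, and suppose `y0 ∈ Y` has degree 0 in `F`.  Then there is
a pseudo path factor `F'` of `G` whose set of covered `Y`-vertices equals the set
covered by `F` together with `y0`. -/
theorem stmt_5 {V : Type*} [Fintype V] (G : SimpleGraph V) (Y X : Finset V)
    (hpart : ∀ v, (v ∈ Y ∧ v ∉ X) ∨ (v ∈ X ∧ v ∉ Y))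
    (hbip : ∀ u v, G.Adj u v → (u ∈ Y ∧ v ∈ X) ∨ (u ∈ X ∧ v ∈ Y))
    (hY : ∀ y ∈ Y, fdeg G y = 3) (hX : ∀ x ∈ X, fdeg G x = 4)
    (F : SimpleGraph V) (hFG : F ≤ G) (hacyc : F.IsAcyclic)
    (hFX : ∀ x ∈ X, fdeg F x = 2) (hFY : ∀ y ∈ Y, fdeg F y ≤ 2)
    (hends : ∀ v, fdeg F v = 1 → v ∈ Y)
    (y0 : V) (hy0 : y0 ∈ Y) (hdeg0 : fdeg F y0 = 0) :
    ∃ F' : SimpleGraph V, F' ≤ G ∧ F'.IsAcyclic ∧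
      (∀ x ∈ X, fdeg F' x = 2) ∧ (∀ y ∈ Y, fdeg F' y ≤ 2) ∧
      (∀ v, fdeg F' v = 1 → v ∈ Y) ∧
      (∀ y ∈ Y, 0 < fdeg F' y ↔ (0 < fdeg F y ∨ y = y0)) := by
  have hYX : G.IsBipartiteWith Y X :=
    ⟨Finset.disjoint_coe.mpr (Finset.disjoint_left.mpr fun v hv => by grind), hbip⟩
  have hF : IsPseudoPathFactor G Y X F := ⟨hFG, hacyc, hFX, hFY, hends⟩
  obtain ⟨n, z, x, w, hc, hzx, hxw, hw⟩ := exists_altChain_to_fdeg_eq_two (d := 3) (by norm_num)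
    hYX (fun y hy => (hY y hy).ge) (fun x hx => (hX x hx).trans_le (by norm_num)) hF hy0 hdeg0
  obtain ⟨F', hF', hcover⟩ := augmentable_of_altChain hYX hF hy0 hdeg0 hc hzx hxw hw
  exact ⟨F', hF'.le, hF'.isAcyclic, hF'.fdeg_of_mem_X, hF'.fdeg_le_of_mem_Y,
    hF'.mem_Y_of_fdeg_eq_one, hcover⟩
end

section
/- There exists a (3,4)-biregular bipartite multigraph that has no path factor in which every component path has both endpoints on the degree-3 side. Concretely, the multigraph formed by three triple-edges x_i y_i (i = 1,2,3) together with an extra vertex y_0 joined by single edges to x_1, x_2, x_3 is (3,4)-biregular but admits no such path factor. -/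
/-!
Every `xᵢ` has only the two neighbours `y₀` and `yᵢ`. In a path factor `xᵢ ∉ Y` cannot be an
endpoint, so it has degree 2 and is therefore joined to `y₀`; but then `y₀` has degree 3.
-/

/-- The edge-endpoint map of the multigraph on `Y = {0,1,2,3}` (the `yᵢ`) and
`X = {4,5,6}` (the `xᵢ`): three parallel edges between `yᵢ` and `xᵢ` for
`i = 1,2,3`, and one edge from `y₀` to each `xᵢ`. -/
def mgEnds : Fin 12 → Sym2 (Fin 7) :=
  ![s(1,4), s(1,4), s(1,4), s(2,5), s(2,5), s(2,5), s(3,6), s(3,6), s(3,6),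
    s(0,4), s(0,5), s(0,6)]

namespace SimpleGraph

variable {V : Type*} {G : SimpleGraph V}

theorem adj_of_neighborSet_subset_pair {v a b : V} (hsub : G.neighborSet v ⊆ {a, b})
    (hdeg : 2 ≤ (G.neighborSet v).ncard) : G.Adj v a := by
  by_contra hva
  have hsub' : G.neighborSet v ⊆ {b} := fun u hu =>
    (hsub hu).resolve_left fun hua => hva (hua ▸ hu)
  have := Set.ncard_le_ncard hsub' (Set.finite_singleton b)
  rw [Set.ncard_singleton] at this
  omega

theorem fromRel_endpoints_adj {E : Type*} (f : E → Sym2 V) (S : Finset E) {u v : V} :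
    (fromRel fun u v => ∃ e ∈ S, f e = s(u, v)).Adj u v ↔ u ≠ v ∧ ∃ e ∈ S, f e = s(u, v) := by
  rw [fromRel_adj, Sym2.eq_swap]
  simp only [Sym2.eq_swap (a := v), or_self]

end SimpleGraph

open SimpleGraph

theorem mgEnds_eq_mk_of_mem_X :
    ∀ x ∈ ({4, 5, 6} : Finset (Fin 7)), ∀ e v, mgEnds e = s(x, v) → v = 0 ∨ v = x - 3 := by
  decide

theorem neighborSet_fromRel_mgEnds_subset (S : Finset (Fin 12)) {x : Fin 7}
    (hx : x ∈ ({4, 5, 6} : Finset (Fin 7))) :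
    (fromRel fun u v => ∃ e ∈ S, mgEnds e = s(u, v)).neighborSet x ⊆ {0, x - 3} := by
  intro v hv
  obtain ⟨-, e, -, he⟩ := (fromRel_endpoints_adj mgEnds S).1 hv
  exact mgEnds_eq_mk_of_mem_X x hx e v he

/-- A path factor is encoded by its edge set `S`: no two parallel edges occur in `S` (so
`mgEnds` is injective on `S`) and the associated simple graph `H` is acyclic with every vertex
of degree 1 or 2; the endpoint condition says all degree-1 vertices of `H` lie in `Y`. -/
theorem stmt_7 :
    (∀ y ∈ ({0, 1, 2, 3} : Finset (Fin 7)),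
      (Finset.univ.filter (fun e => y ∈ mgEnds e)).card = 3) ∧
    (∀ x ∈ ({4, 5, 6} : Finset (Fin 7)),
      (Finset.univ.filter (fun e => x ∈ mgEnds e)).card = 4) ∧
    ¬ ∃ S : Finset (Fin 12), Set.InjOn mgEnds ↑S ∧
        ∀ H : SimpleGraph (Fin 7),
          H = SimpleGraph.fromRel (fun u v => ∃ e ∈ S, mgEnds e = s(u, v)) →
          H.IsAcyclic ∧ (∀ v, 1 ≤ (H.neighborSet v).ncard) ∧
            (∀ v, (H.neighborSet v).ncard ≤ 2) ∧
            (∀ v, (H.neighborSet v).ncard = 1 → v ∈ ({0, 1, 2, 3} : Finset (Fin 7))) := by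
  refine ⟨by decide, by decide, ?_⟩
  rintro ⟨S, -, hS⟩
  obtain ⟨-, hpos, hle, hleaf⟩ := hS _ rfl
  have hX_nbr : ↑({4, 5, 6} : Finset (Fin 7)) ⊆
      (fromRel fun u v => ∃ e ∈ S, mgEnds e = s(u, v)).neighborSet 0 := by
    intro x hx
    have hnotY : x ∉ ({0, 1, 2, 3} : Finset (Fin 7)) := by revert x; decide
    have hnot_leaf := mt (hleaf x) hnotY
    exact (adj_of_neighborSet_subset_pair (neighborSet_fromRel_mgEnds_subset S hx)
      (by have := hpos x; omega)).symm
  have hdeg0 := Set.ncard_le_ncard hX_nbr (Set.toFinite _)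
  rw [Set.ncard_coe_finset, show ({4, 5, 6} : Finset (Fin 7)).card = 3 by rfl] at hdeg0
  exact absurd (hle 0) (by omega)
end
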